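/- Let μ be a probability measure on ℝⁿ whose support A is bounded and contains n+1 affinely independent points a₀,...,aₙ. Then there exist ψ > 0, γ > 0, η > 0 such that for every y ∈ A and every hyperplane V through y, there is an index i with: the ball W = U_γ(aᵢ) satisfies μ(W) ≥ η, and every chord from y to a point w ∈ W forms an angle ≥ ψ with V (i.e. dist(w,V)/|w−y| ≥ sin ψ). -/

import Mathlib

/-!
The vectors `aᵢ - a₀` span ℝⁿ, so the linear map `u ↦ (⟪u, aᵢ - a₀⟫)ᵢ` is injective, hence
antilipschitz: every unit normal `u` has `|⟪u, aᵢ - a₀⟫| ≥ 2c` for some `i`, with `c > 0`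
uniform in `u`. Splitting `aᵢ - a₀ = (aᵢ - y) - (a₀ - y)`, some `aⱼ` lies at height at least `c`
above the hyperplane through `y` with normal `u`, hence every point of `U_γ(aⱼ)`, `γ = c / 2`,
lies at height at least `c / 2`. As `A` is bounded, the chords from `y` to this ball have bounded length, which turns
the height bound into an angle bound; `η` is the least mass of the `n + 1` balls.
-/

open scoped RealInnerProductSpace ENNReal
open Metric

theorem AffineIndependent.span_range_vsub_eq_top {k V P ι : Type*} [DivisionRing k]
    [AddCommGroup V] [Module k V] [AddTorsor V P] [Fintype ι] [FiniteDimensional k V]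
    {p : ι → P} (hp : AffineIndependent k p) (hcard : Fintype.card ι = Module.finrank k V + 1)
    (i₀ : ι) : Submodule.span k (Set.range fun i => p i -ᵥ p i₀) = ⊤ := by
  rw [← vectorSpan_range_eq_span_range_vsub_right k p i₀]
  exact AffineSubspace.vectorSpan_eq_top_of_affineSpan_eq_top k V P
    (hp.affineSpan_eq_top_iff_card_eq_finrank_add_one.2 hcard)

theorem ENNReal.exists_pos_ofReal_le_of_finite {ι : Type*} [Finite ι] {f : ι → ℝ≥0∞}
    (hf : ∀ i, 0 < f i) : ∃ η > 0, ∀ i, ENNReal.ofReal η ≤ f i := by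
  choose r _ hr hrf using fun i => ENNReal.lt_iff_exists_real_btwn.1 (hf i)
  rcases isEmpty_or_nonempty ι with hι | hι
  · exact ⟨1, one_pos, isEmptyElim⟩
  obtain ⟨i₀, hi₀⟩ := Finite.exists_min r
  exact ⟨r i₀, ENNReal.ofReal_pos.1 (hr i₀),
    fun i => (ENNReal.ofReal_le_ofReal (hi₀ i)).trans (hrf i).le⟩

section InnerProductSpace

variable {E : Type*} [NormedAddCommGroup E] [InnerProductSpace ℝ E]

theorem eq_zero_of_inner_eq_zero_of_span_eq_top {ι : Type*} {v : ι → E}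
    (hv : Submodule.span ℝ (Set.range v) = ⊤) {u : E} (hu : ∀ i, ⟪u, v i⟫ = 0) : u = 0 := by
  have hspan : Submodule.span ℝ (Set.range v) ≤ (ℝ ∙ u)ᗮ :=
    Submodule.span_le.2 <| Set.range_subset_iff.2 fun i =>
      Submodule.mem_orthogonal_singleton_iff_inner_right.2 (hu i)
  rw [hv, top_le_iff] at hspan
  have hu : u ∈ (ℝ ∙ u)ᗮ := hspan ▸ Submodule.mem_top
  exact inner_self_eq_zero.1 (Submodule.mem_orthogonal_singleton_iff_inner_right.1 hu)

theorem exists_pos_le_abs_inner_of_span_eq_top [FiniteDimensional ℝ E] {ι : Type*} [Fintype ι]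
    {v : ι → E} (hv : Submodule.span ℝ (Set.range v) = ⊤) :
    ∃ c > 0, ∀ u : E, ‖u‖ = 1 → ∃ i, c ≤ |⟪u, v i⟫| := by
  let L : E →ₗ[ℝ] ι → ℝ := LinearMap.pi fun i => (innerₛₗ ℝ).flip (v i)
  have hL : LinearMap.ker L = ⊥ :=
    LinearMap.ker_eq_bot'.2 fun u hu =>
      eq_zero_of_inner_eq_zero_of_span_eq_top hv fun i => congr_fun hu i
  obtain ⟨K, hK, hLK⟩ := L.exists_antilipschitzWith hL
  have hK : (0 : ℝ) < K := hK
  refine ⟨(K : ℝ)⁻¹, inv_pos.2 hK, fun u hu => ?_⟩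
  by_contra! hsmall
  have hLu : ‖L u‖ < (K : ℝ)⁻¹ := (pi_norm_lt_iff (inv_pos.2 hK)).2 fun i => by
    simpa [L, Real.norm_eq_abs, real_inner_comm] using hsmall i
  have : (1 : ℝ) < 1 :=
    calc 1 = ‖u‖ := hu.symm
      _ ≤ K * ‖L u‖ := hLK.le_mul_norm (map_zero L) u
      _ < K * (K : ℝ)⁻¹ := mul_lt_mul_of_pos_left hLu hK
      _ = 1 := mul_inv_cancel₀ hK.ne'
  exact lt_irrefl 1 this

theorem exists_pos_le_abs_inner_sub_of_span_eq_top [FiniteDimensional ℝ E] {ι : Type*}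
    [Fintype ι] {a : ι → E} {i₀ : ι} (ha : Submodule.span ℝ (Set.range fun i => a i - a i₀) = ⊤) :
    ∃ c > 0, ∀ u : E, ‖u‖ = 1 → ∀ y, ∃ j, c ≤ |⟪u, a j - y⟫| := by
  obtain ⟨c, hc, hcu⟩ := exists_pos_le_abs_inner_of_span_eq_top ha
  refine ⟨c / 2, half_pos hc, fun u hu y => ?_⟩
  obtain ⟨i, hi⟩ := hcu u hu
  have hsplit : |⟪u, a i - a i₀⟫| ≤ |⟪u, a i - y⟫| + |⟪u, a i₀ - y⟫| := by
    rw [show a i - a i₀ = (a i - y) - (a i₀ - y) by abel, inner_sub_right]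
    exact abs_sub _ _
  by_cases hiy : c / 2 ≤ |⟪u, a i - y⟫|
  · exact ⟨i, hiy⟩
  · exact ⟨i₀, by linarith⟩

theorem abs_inner_sub_le_add_dist {u : E} (hu : ‖u‖ = 1) (a w y : E) :
    |⟪u, a - y⟫| ≤ |⟪u, w - y⟫| + dist w a := by
  rw [show a - y = (w - y) - (w - a) by abel, inner_sub_right]
  calc |⟪u, w - y⟫ - ⟪u, w - a⟫| ≤ |⟪u, w - y⟫| + |⟪u, w - a⟫| := abs_sub _ _
    _ ≤ |⟪u, w - y⟫| + ‖u‖ * ‖w - a‖ := by gcongr; exact abs_real_inner_le_norm u _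
    _ = |⟪u, w - y⟫| + dist w a := by rw [hu, one_mul, dist_eq_norm]

theorem abs_inner_sub_le_infDist {u : E} (hu : ‖u‖ = 1) (w y : E) :
    |⟪u, w - y⟫| ≤ infDist w {x | ⟪u, x - y⟫ = 0} := by
  refine (le_infDist ⟨y, by simp⟩).2 fun x (hx : ⟪u, x - y⟫ = 0) => ?_
  have h := abs_inner_sub_le_add_dist hu w x y
  rwa [hx, abs_zero, zero_add, dist_comm] at h

end InnerProductSpace

theorem stmt_3_general (n : ℕ) (μ : MeasureTheory.Measure (EuclideanSpace ℝ (Fin n)))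
    (A : Set (EuclideanSpace ℝ (Fin n)))
    (hA : A = {y | ∀ ε > (0 : ℝ), 0 < μ (Metric.ball y ε)})
    (hAb : Bornology.IsBounded A)
    (a : Fin (n + 1) → EuclideanSpace ℝ (Fin n))
    (haA : ∀ i, a i ∈ A) (hind : AffineIndependent ℝ a) :
    ∃ ψ > (0 : ℝ), ∃ γ > (0 : ℝ), ∃ η > (0 : ℝ), ∀ y ∈ A,
      ∀ u : EuclideanSpace ℝ (Fin n), ‖u‖ = 1 →
        ∃ i : Fin (n + 1), ENNReal.ofReal η ≤ μ (Metric.ball (a i) γ) ∧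
          ∀ w ∈ Metric.ball (a i) γ,
            Real.sin ψ * dist w y ≤ Metric.infDist w {x | ⟪u, x - y⟫ = 0} := by
  subst hA
  obtain ⟨c, hc, hfar⟩ := exists_pos_le_abs_inner_sub_of_span_eq_top
    (hind.span_range_vsub_eq_top (by simp) 0)
  obtain ⟨C, hC⟩ := isBounded_iff.1 hAb
  have hC0 : 0 ≤ C := dist_self (a 0) ▸ hC (haA 0) (haA 0)
  have hγ : 0 < c / 2 := half_pos hc
  obtain ⟨η, hη, hμ⟩ := ENNReal.exists_pos_ofReal_le_of_finite fun i => haA i (c / 2) hγ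
  refine ⟨c / 2 / (C + c / 2), by positivity, c / 2, hγ, η, hη, fun y hy u hu => ?_⟩
  obtain ⟨j, hj⟩ := hfar u hu y
  refine ⟨j, hμ j, fun w hw => ?_⟩
  rw [mem_ball] at hw
  have hwy : dist w y ≤ C + c / 2 := by
    linarith [dist_triangle w (a j) y, hC (haA j) hy]
  calc Real.sin (c / 2 / (C + c / 2)) * dist w y
      ≤ c / 2 / (C + c / 2) * (C + c / 2) := by
        gcongr
        exact Real.sin_le (by positivity)
    _ = c / 2 := div_mul_cancel₀ _ (by positivity)
    _ ≤ |⟪u, w - y⟫| := by linarith [abs_inner_sub_le_add_dist hu (a j) w y]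
    _ ≤ infDist w {x | ⟪u, x - y⟫ = 0} := abs_inner_sub_le_infDist hu w y

/-- Lemma 5: for a probability measure `μ` on ℝⁿ whose support `A` is bounded and
contains `n+1` affinely independent points `a i`, there exist `ψ, γ, η > 0` such that
for every `y ∈ A` and every hyperplane `V` through `y` (unit normal `u`), some ball
`U_γ(aᵢ)` has measure at least `η` and every chord from `y` to a point `w` of that
ball subtends an angle `≥ ψ` with `V`, i.e. `dist(w, V) ≥ sin ψ · |w - y|`. -/
theorem stmt_3 (n : ℕ) (μ : MeasureTheory.Measure (EuclideanSpace ℝ (Fin n)))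
    [MeasureTheory.IsProbabilityMeasure μ]
    (A : Set (EuclideanSpace ℝ (Fin n)))
    (hA : A = {y | ∀ ε > (0 : ℝ), 0 < μ (Metric.ball y ε)})
    (hAb : Bornology.IsBounded A)
    (a : Fin (n + 1) → EuclideanSpace ℝ (Fin n))
    (haA : ∀ i, a i ∈ A) (hind : AffineIndependent ℝ a) :
    ∃ ψ > (0 : ℝ), ∃ γ > (0 : ℝ), ∃ η > (0 : ℝ), ∀ y ∈ A,
      ∀ u : EuclideanSpace ℝ (Fin n), ‖u‖ = 1 →
        ∃ i : Fin (n + 1), ENNReal.ofReal η ≤ μ (Metric.ball (a i) γ) ∧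
          ∀ w ∈ Metric.ball (a i) γ,
            Real.sin ψ * dist w y ≤ Metric.infDist w {x | ⟪u, x - y⟫ = 0} :=
  stmt_3_general n μ A hA hAb a haA hind
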